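/- Let x_1 < x_2 < ⋯ < x_n be reals, let r ≥ 1 be an integer with n ≥ r + 1, and let v ∈ ℝⁿ. If φ_{(i, i+1, …, i+r)}(v) ≥ 0 for every i ∈ {1, …, n − r}, then φ_i(v) ≥ 0 for every increasing tuple i = (i_1, …, i_{r+1}) of indices in {1, …, n}. Consequently the set of vectors v whose consecutive-index determinants are all nonnegative coincides with the set of vectors whose determinants at all increasing (r+1)-tuples are nonnegative. -/

import Mathlib

open Finset Polynomial

/-- The determinant `φ_i(v)` of the `(r+1) × (r+1)` matrix whose `k`-th row is
`(1, x_{i_k}, x_{i_k}², …, x_{i_k}^{r-1}, v_{i_k})`. -/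
noncomputable def phiDet {n : ℕ} (r : ℕ) (x v : Fin n → ℝ) (idx : Fin (r + 1) → Fin n) : ℝ :=
  Matrix.det (Matrix.of fun k l : Fin (r + 1) =>
    if (l : ℕ) = r then v (idx k) else x (idx k) ^ (l : ℕ))

/-- Divided difference of `v` over nodes `x` on the finite index set `T`. -/
noncomputable def ddiff {n : ℕ} (x : Fin n → ℝ) (T : Finset (Fin n)) (v : Fin n → ℝ) : ℝ :=
  ∑ t ∈ T, v t / ∏ s ∈ T.erase t, (x t - x s)

lemma coeff_lagrange_basis {n : ℕ} (x : Fin n → ℝ) (T : Finset (Fin n)) {t : Fin n}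
    (ht : t ∈ T) :
    (Lagrange.basis T x t).coeff (T.card - 1) = (∏ s ∈ T.erase t, (x t - x s))⁻¹ := by
  have hcard : (T.erase t).card = T.card - 1 := Finset.card_erase_of_mem ht
  rw [Lagrange.basis]
  simp only [Lagrange.basisDivisor]
  rw [Finset.prod_mul_distrib, ← map_prod, coeff_C_mul]
  have hmonic : (∏ j ∈ T.erase t, (X - C (x j))).Monic :=
    monic_prod_of_monic _ _ fun j _ => monic_X_sub_C _
  have hdeg : (∏ j ∈ T.erase t, (X - C (x j))).natDegree = (T.erase t).card := by
    rw [natDegree_prod _ _ (fun j _ => X_sub_C_ne_zero (x j))]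
    simp
  rw [← hcard, ← hdeg, hmonic.coeff_natDegree, mul_one, ← Finset.prod_inv_distrib]

lemma ddiff_eq_coeff {n : ℕ} (x : Fin n → ℝ) (T : Finset (Fin n)) (v : Fin n → ℝ) :
    ddiff x T v = (Lagrange.interpolate T x v).coeff (T.card - 1) := by
  rw [Lagrange.interpolate_apply, finset_sum_coeff]
  refine Finset.sum_congr rfl fun t ht => ?_
  rw [coeff_C_mul, coeff_lagrange_basis x T ht, div_eq_mul_inv]

lemma phi_eq_ddiff {n r : ℕ} {x : Fin n → ℝ} (hx : StrictMono x) (v : Fin n → ℝ)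
    {idx : Fin (r + 1) → Fin n} (hidx : StrictMono idx) :
    phiDet r x v idx =
      ddiff x (Finset.image idx Finset.univ) v *
        ∏ i : Fin (r+1), ∏ j ∈ Finset.Ioi i, (x (idx j) - x (idx i)) := by
  set T := Finset.image idx Finset.univ with hT
  have hTcard : T.card = r + 1 := by
    rw [hT, Finset.card_image_of_injective _ hidx.injective, card_univ, Fintype.card_fin]
  have hinj : Set.InjOn x T := hx.injective.injOn
  set P := Lagrange.interpolate T x v with hP
  have hdeg : P.degree < (r + 1 : ℕ) := by
    rw [hP, ← hTcard]; exact Lagrange.degree_interpolate_lt v hinj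
  have hnat : P.natDegree < r + 1 := by
    rcases eq_or_ne P 0 with h0 | h0
    · simp [h0]
    · exact natDegree_lt_iff_degree_lt h0 |>.mpr hdeg
  have hmem : ∀ k : Fin (r+1), idx k ∈ T := fun k => Finset.mem_image_of_mem _ (mem_univ k)
  have heval : ∀ k : Fin (r+1), v (idx k) = P.eval (x (idx k)) := fun k =>
    (Lagrange.eval_interpolate_at_node v hinj (hmem k)).symm
  have step1 : phiDet r x v idx =
      Matrix.det ((Matrix.vandermonde (x ∘ idx)).updateCol (Fin.last r)
        (fun k => v (idx k))) := by
    unfold phiDet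
    congr 1
    ext k l
    rw [Matrix.updateCol_apply]
    by_cases hl : l = Fin.last r
    · simp [hl, Matrix.of_apply]
    · have : (l : ℕ) ≠ r := by
        intro hc; exact hl (Fin.ext (by simp [hc]))
      simp [this, hl, Matrix.vandermonde]
  have step2 : (fun k => v (idx k)) =
      fun k => ∑ j : Fin (r+1), P.coeff j • Matrix.vandermonde (x ∘ idx) k j := by
    funext k
    rw [heval k, eval_eq_sum_range' hnat, ← Fin.sum_univ_eq_sum_range]
    simp [Matrix.vandermonde, mul_comm]
  rw [step1, step2, Matrix.det_updateCol_sum, Matrix.det_vandermonde]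
  have hco : P.coeff (Fin.last r) = ddiff x T v := by
    rw [ddiff_eq_coeff, hTcard, Fin.val_last, Nat.add_sub_cancel]
  rw [smul_eq_mul, hco]
  ring_nf
  simp [Function.comp]

lemma prod_diff_ne_zero {n : ℕ} {x : Fin n → ℝ} (hx : Function.Injective x)
    {t : Fin n} {U : Finset (Fin n)} (ht : t ∉ U) :
    ∏ s ∈ U, (x t - x s) ≠ 0 := by
  refine Finset.prod_ne_zero_iff.mpr fun s hs => sub_ne_zero_of_ne (fun he => ?_)
  exact ht ((hx he) ▸ hs)

lemma ddiff_rec {n : ℕ} {x : Fin n → ℝ} (hx : Function.Injective x)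
    {T : Finset (Fin n)} {a b : Fin n} (ha : a ∈ T) (hb : b ∈ T) (hab : a ≠ b)
    (v : Fin n → ℝ) :
    ddiff x (T.erase a) v - ddiff x (T.erase b) v = (x b - x a) * ddiff x T v := by
  have hba : b ∈ T.erase a := Finset.mem_erase.mpr ⟨(Ne.symm hab), hb⟩
  have hab' : a ∈ T.erase b := Finset.mem_erase.mpr ⟨hab, ha⟩
  have hxab : x a ≠ x b := fun he => hab (hx he)
  -- expand the three sums
  unfold ddiff
  rw [← Finset.add_sum_erase _ _ hba, ← Finset.add_sum_erase _ _ hab',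
    ← Finset.add_sum_erase _ _ ha, ← Finset.add_sum_erase _ _ hba]
  have hcomm : (T.erase b).erase a = (T.erase a).erase b := Finset.erase_right_comm
  rw [hcomm]
  have hQ : ∀ c d : Fin n, c ∈ T → d ∈ T → c ≠ d →
      ∏ s ∈ T.erase c, (x c - x s) = (x c - x d) * ∏ s ∈ (T.erase c).erase d, (x c - x s) := by
    intro c d hc hd hcd
    exact (Finset.mul_prod_erase _ _ (Finset.mem_erase.mpr ⟨hcd.symm, hd⟩)).symm
  -- term for b
  have hQb : (∏ s ∈ (T.erase b).erase a, (x b - x s)) ≠ 0 :=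
    prod_diff_ne_zero hx (fun hc => (Finset.mem_erase.mp (Finset.mem_erase.mp hc).2).1 rfl)
  have tb : v b / ∏ s ∈ (T.erase a).erase b, (x b - x s)
      = (x b - x a) * (v b / ∏ s ∈ T.erase b, (x b - x s)) := by
    rw [hQ b a hb ha hab.symm, ← hcomm]
    rw [mul_div_assoc']
    rw [eq_div_iff (by exact mul_ne_zero (sub_ne_zero_of_ne (fun he => hab (hx he.symm))) hQb)]
    field_simp
  -- term for a
  have hQa : (∏ s ∈ (T.erase a).erase b, (x a - x s)) ≠ 0 :=
    prod_diff_ne_zero hx (fun hc => (Finset.mem_erase.mp (Finset.mem_erase.mp hc).2).1 rfl)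
  have ta : -(v a / ∏ s ∈ (T.erase a).erase b, (x a - x s))
      = (x b - x a) * (v a / ∏ s ∈ T.erase a, (x a - x s)) := by
    rw [hQ a b ha hb hab]
    rw [mul_div_assoc']
    have hne := mul_ne_zero (sub_ne_zero_of_ne hxab) hQa
    field_simp
    ring
  -- pointwise identity on the common part
  have hsum : (∑ t ∈ (T.erase a).erase b, v t / ∏ s ∈ (T.erase a).erase t, (x t - x s))
      - (∑ t ∈ (T.erase a).erase b, v t / ∏ s ∈ (T.erase b).erase t, (x t - x s))
      = ∑ t ∈ (T.erase a).erase b, (x b - x a) * (v t / ∏ s ∈ T.erase t, (x t - x s)) := by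
    rw [← Finset.sum_sub_distrib]
    refine Finset.sum_congr rfl fun t ht => ?_
    have ht' := Finset.mem_erase.mp ht
    have hta : t ≠ a := (Finset.mem_erase.mp ht'.2).1
    have htb : t ≠ b := ht'.1
    have htT : t ∈ T := (Finset.mem_erase.mp ht'.2).2
    have e1 : (T.erase a).erase t = (T.erase t).erase a := Finset.erase_right_comm
    have e2 : (T.erase b).erase t = (T.erase t).erase b := Finset.erase_right_comm
    set P := ((T.erase t).erase a).erase b with hPdef
    have hPa : t ∉ P := fun hc =>
      (Finset.mem_erase.mp (Finset.mem_erase.mp (Finset.mem_erase.mp hc).2).2).1 rfl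
    have hPne : ∏ s ∈ P, (x t - x s) ≠ 0 := prod_diff_ne_zero hx hPa
    have hDa : ∏ s ∈ (T.erase t).erase a, (x t - x s)
        = (x t - x b) * ∏ s ∈ P, (x t - x s) := by
      rw [hPdef]
      exact (Finset.mul_prod_erase _ _ (Finset.mem_erase.mpr ⟨Ne.symm hab,
        Finset.mem_erase.mpr ⟨htb.symm, hb⟩⟩)).symm
    have hDb : ∏ s ∈ (T.erase t).erase b, (x t - x s)
        = (x t - x a) * ∏ s ∈ P, (x t - x s) := by
      have e3 : ((T.erase t).erase b).erase a = P := Finset.erase_right_comm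
      rw [← e3]
      exact (Finset.mul_prod_erase _ _ (Finset.mem_erase.mpr ⟨hab,
        Finset.mem_erase.mpr ⟨hta.symm, ha⟩⟩)).symm
    have hDt : ∏ s ∈ T.erase t, (x t - x s)
        = (x t - x a) * ((x t - x b) * ∏ s ∈ P, (x t - x s)) := by
      rw [← hDa]
      exact (Finset.mul_prod_erase _ _ (Finset.mem_erase.mpr ⟨hta.symm, ha⟩)).symm
    rw [e1, e2, hDa, hDb, hDt]
    have hxa : x t - x a ≠ 0 := sub_ne_zero_of_ne (fun he => hta (hx he))
    have hxb : x t - x b ≠ 0 := sub_ne_zero_of_ne (fun he => htb (hx he))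
    field_simp
    ring
  rw [mul_add, mul_add, Finset.mul_sum]
  linarith [tb, ta, hsum]

lemma vprod_pos {n r : ℕ} {x : Fin n → ℝ} (hx : StrictMono x)
    {idx : Fin (r + 1) → Fin n} (hidx : StrictMono idx) :
    0 < ∏ i : Fin (r+1), ∏ j ∈ Finset.Ioi i, (x (idx j) - x (idx i)) := by
  refine Finset.prod_pos fun i _ => Finset.prod_pos fun j hj => ?_
  exact sub_pos.mpr (hx (hidx (Finset.mem_Ioi.mp hj)))

lemma consec_strictMono {n r : ℕ} {i : ℕ} (hi : i + r < n) :
    StrictMono (fun k : Fin (r+1) => (⟨i + (k : ℕ), Nat.lt_of_lt_of_le (Nat.add_lt_add_left k.isLt _) hi⟩ : Fin n)) := by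
  intro a b hab
  simp only [Fin.mk_lt_mk]
  have : (a : ℕ) < b := hab
  omega

lemma ddiff_nonneg_main {n r : ℕ} (hr : 1 ≤ r) (hn : r + 1 ≤ n)
    {x : Fin n → ℝ} (hx : StrictMono x) (w : Fin n → ℝ)
    (h : ∀ i : ℕ, ∀ hi : i + r < n,
      0 ≤ phiDet r x w fun k => ⟨i + (k : ℕ), Nat.lt_of_lt_of_le (Nat.add_lt_add_left k.isLt _) hi⟩) :
    ∀ T : Finset (Fin n), T.card = r + 1 → 0 ≤ ddiff x T w := by
  have hcons : ∀ i : ℕ, ∀ hi : i + r < n,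
      0 ≤ ddiff x (Finset.image
        (fun k : Fin (r+1) => (⟨i + (k : ℕ), Nat.lt_of_lt_of_le (Nat.add_lt_add_left k.isLt _) hi⟩ : Fin n))
        Finset.univ) w := by
    intro i hi
    have hmono := consec_strictMono (r := r) hi
    have hphi : 0 ≤ phiDet r x w
        (fun k : Fin (r+1) => (⟨i + (k : ℕ), Nat.lt_of_lt_of_le (Nat.add_lt_add_left k.isLt _) hi⟩ : Fin n)) := h i hi
    rw [phi_eq_ddiff hx w hmono] at hphi
    exact nonneg_of_mul_nonneg_left hphi (vprod_pos hx hmono)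
  have main : ∀ d : ℕ, ∀ T : Finset (Fin n), T.card = r + 1 →
      ∀ hne : T.Nonempty, ((T.max' hne : ℕ) - (T.min' hne : ℕ)) ≤ d → 0 ≤ ddiff x T w := by
    intro d
    induction d with
    | zero =>
      intro T hcard hne hspan
      have h2 : 1 < T.card := by omega
      have hlt : (T.min' hne : ℕ) < (T.max' hne : ℕ) := T.min'_lt_max'_of_card h2
      omega
    | succ d IH =>
      intro T hcard hne hspan
      have h2 : 1 < T.card := by omega
      have hlt : (T.min' hne : ℕ) < (T.max' hne : ℕ) := T.min'_lt_max'_of_card h2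
      set m := T.min' hne with hm
      set M := T.max' hne with hM
      have hsub : T ⊆ Finset.Icc m M := fun t ht =>
        Finset.mem_Icc.mpr ⟨T.min'_le t ht, T.le_max' t ht⟩
      have hIccCard : (Finset.Icc m M).card = (M : ℕ) + 1 - (m : ℕ) := Fin.card_Icc ..
      have hge : r ≤ (M : ℕ) - (m : ℕ) := by
        have := Finset.card_le_card hsub
        omega
      by_cases hspan_eq : (M : ℕ) - (m : ℕ) = r
      · -- consecutive case
        have hi : (m : ℕ) + r < n := by have := (M : Fin n).isLt; omega
        have himg : T = Finset.image
            (fun k : Fin (r+1) => (⟨(m : ℕ) + (k : ℕ), Nat.lt_of_lt_of_le (Nat.add_lt_add_left k.isLt _) hi⟩ : Fin n))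
            Finset.univ := by
          apply Finset.eq_of_subset_of_card_le
          · intro t ht
            have h1 : (m : ℕ) ≤ (t : ℕ) := T.min'_le t ht
            have h2' : (t : ℕ) ≤ (M : ℕ) := T.le_max' t ht
            refine Finset.mem_image.mpr ⟨⟨(t : ℕ) - (m : ℕ), by omega⟩, Finset.mem_univ _, ?_⟩
            apply Fin.ext
            simp
            omega
          · rw [Finset.card_image_of_injective _ (consec_strictMono hi).injective,
              Finset.card_univ, Fintype.card_fin, hcard]
        rw [himg]
        exact hcons (m : ℕ) hi
      · -- gap case
        have hspan_gt : r < (M : ℕ) - (m : ℕ) := lt_of_le_of_ne hge (Ne.symm hspan_eq)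
        have hnotsub : ¬ Finset.Icc m M ⊆ T := by
          intro hs
          have := Finset.card_le_card hs
          omega
        obtain ⟨z, hzI, hzT⟩ := Finset.not_subset.mp hnotsub
        have hmz : (m : ℕ) ≤ z := (Finset.mem_Icc.mp hzI).1
        have hzM : (z : ℕ) ≤ M := (Finset.mem_Icc.mp hzI).2
        have hmem_m : m ∈ T := T.min'_mem hne
        have hmem_M : M ∈ T := T.max'_mem hne
        have hz_ne_m : z ≠ m := fun he => hzT (he ▸ hmem_m)
        have hz_ne_M : z ≠ M := fun he => hzT (he ▸ hmem_M)
        have hmz' : (m : ℕ) < z := lt_of_le_of_ne hmz (by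
          intro he; exact hz_ne_m (Fin.ext he.symm))
        have hzM' : (z : ℕ) < M := lt_of_le_of_ne hzM (by
          intro he; exact hz_ne_M (Fin.ext he))
        set T' := insert z T with hT'
        have hzT' : z ∈ T' := Finset.mem_insert_self z T
        have hmT' : m ∈ T' := Finset.mem_insert_of_mem hmem_m
        have hMT' : M ∈ T' := Finset.mem_insert_of_mem hmem_M
        have hA := ddiff_rec hx.injective hzT' hmT' hz_ne_m w
        have hB := ddiff_rec hx.injective hzT' hMT' hz_ne_M w
        rw [Finset.erase_insert hzT] at hA hB
        set E1 := T'.erase m with hE1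
        set E2 := T'.erase M with hE2
        have hcard' : T'.card = r + 2 := by
          rw [hT', Finset.card_insert_of_notMem hzT, hcard]
        have hE1card : E1.card = r + 1 := by
          rw [hE1, Finset.card_erase_of_mem hmT', hcard']
          omega
        have hE2card : E2.card = r + 1 := by
          rw [hE2, Finset.card_erase_of_mem hMT', hcard']
          omega

        have hE1ne : E1.Nonempty := Finset.card_pos.mp (by omega)
        have hE2ne : E2.Nonempty := Finset.card_pos.mp (by omega)
        -- bounds for elements of T'
        have hT'le : ∀ t ∈ T', (t : ℕ) ≤ M := by
          intro t ht
          rcases Finset.mem_insert.mp ht with h1 | h1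
          · exact h1 ▸ hzM
          · exact T.le_max' t h1
        have hT'ge : ∀ t ∈ T', (m : ℕ) ≤ t := by
          intro t ht
          rcases Finset.mem_insert.mp ht with h1 | h1
          · exact h1 ▸ hmz
          · exact T.min'_le t h1
        -- span of E1
        have hE1max : (E1.max' hE1ne : ℕ) = M := by
          apply le_antisymm
          · exact hT'le _ (Finset.mem_of_mem_erase (E1.max'_mem hE1ne))
          · exact E1.le_max' M (Finset.mem_erase.mpr ⟨by
              intro he; exact absurd (Fin.val_eq_of_eq he) (by omega), hMT'⟩)
        have hE1min : (m : ℕ) < E1.min' hE1ne := by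
          have h1 := Finset.mem_erase.mp (E1.min'_mem hE1ne)
          have h2 := hT'ge _ h1.2
          rcases lt_or_eq_of_le h2 with h3 | h3
          · exact h3
          · exact absurd (Fin.ext h3.symm) h1.1
        have hE1le : (E1.min' hE1ne : ℕ) ≤ E1.max' hE1ne :=
          E1.min'_le _ (E1.max'_mem hE1ne)
        have hE1span : ((E1.max' hE1ne : ℕ) - (E1.min' hE1ne : ℕ)) ≤ d := by omega
        -- span of E2
        have hE2min : (E2.min' hE2ne : ℕ) = m := by
          apply le_antisymm
          · exact E2.min'_le m (Finset.mem_erase.mpr ⟨by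
              intro he; exact absurd (Fin.val_eq_of_eq he) (by omega), hmT'⟩)
          · exact hT'ge _ (Finset.mem_of_mem_erase (E2.min'_mem hE2ne))
        have hE2max : (E2.max' hE2ne : ℕ) < M := by
          have h1 := Finset.mem_erase.mp (E2.max'_mem hE2ne)
          have h2 := hT'le _ h1.2
          rcases lt_or_eq_of_le h2 with h3 | h3
          · exact h3
          · exact absurd (Fin.ext h3) h1.1
        have hE2span : ((E2.max' hE2ne : ℕ) - (E2.min' hE2ne : ℕ)) ≤ d := by omega
        have hddE1 := IH E1 hE1card hE1ne hE1span
        have hddE2 := IH E2 hE2card hE2ne hE2span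
        have hα : 0 < x z - x m := sub_pos.mpr (hx (by exact hmz'))
        have hβ : 0 < x M - x z := sub_pos.mpr (hx (by exact hzM'))
        have hγ : 0 < x M - x m := by linarith
        have key : (x M - x m) * ddiff x T w
            = (x M - x z) * ddiff x E1 w + (x z - x m) * ddiff x E2 w := by
          linear_combination (x M - x z) * hA + (x z - x m) * hB
        nlinarith [mul_nonneg hβ.le hddE1, mul_nonneg hα.le hddE2]
  intro T hcard
  have hne : T.Nonempty := Finset.card_pos.mp (by omega)
  exact main ((T.max' hne : ℕ) - (T.min' hne : ℕ)) T hcard hne le_rfl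

/-- Identity (42) of Lemma 2: if all consecutive-index determinants `φ_{(i,…,i+r)}(v)` are
nonnegative, then so are the determinants `φ_i(v)` at all increasing `(r+1)`-tuples;
consequently the two corresponding sets of vectors coincide. -/
theorem phiDet_nonneg_of_consecutive
    (n r : ℕ) (hr : 1 ≤ r) (hn : r + 1 ≤ n)
    (x : Fin n → ℝ) (hx : StrictMono x) (v : Fin n → ℝ)
    (h : ∀ i : ℕ, ∀ hi : i + r < n,
      0 ≤ phiDet r x v fun k => ⟨i + (k : ℕ), by have := k.isLt; omega⟩) :
    (∀ idx : Fin (r + 1) → Fin n, StrictMono idx → 0 ≤ phiDet r x v idx)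
    ∧ {w : Fin n → ℝ | ∀ i : ℕ, ∀ hi : i + r < n,
          0 ≤ phiDet r x w fun k => ⟨i + (k : ℕ), by have := k.isLt; omega⟩}
        = {w : Fin n → ℝ | ∀ idx : Fin (r + 1) → Fin n, StrictMono idx → 0 ≤ phiDet r x w idx} := by
  have master : ∀ w : Fin n → ℝ,
      (∀ i : ℕ, ∀ hi : i + r < n,
        0 ≤ phiDet r x w fun k => ⟨i + (k : ℕ), by have := k.isLt; omega⟩) →
      ∀ idx : Fin (r + 1) → Fin n, StrictMono idx → 0 ≤ phiDet r x w idx := by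
    intro w hw idx hidx
    rw [phi_eq_ddiff hx w hidx]
    refine mul_nonneg (ddiff_nonneg_main hr hn hx w hw _ ?_) (vprod_pos hx hidx).le
    rw [Finset.card_image_of_injective _ hidx.injective, Finset.card_univ, Fintype.card_fin]
  refine ⟨master v h, ?_⟩
  ext w
  simp only [Set.mem_setOf_eq]
  constructor
  · intro hw idx hidx
    exact master w hw idx hidx
  · intro hw i hi
    exact hw _ (consec_strictMono hi)
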